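/- Every interval [σ,τ] in the consecutive pattern poset is rank-unimodal: letting N = |τ|−|σ| and a_r = #{π : σ ≤ π ≤ τ, |π| = |σ|+r} for 0 ≤ r ≤ N, there exists k with 0 ≤ k ≤ N such that a_0 ≤ a_1 ≤ ⋯ ≤ a_k ≥ a_{k+1} ≥ ⋯ ≥ a_N. -/

import Mathlib

/-!
The elements of length `ℓ` of `[σ, τ]` are the distinct windows of length `ℓ` of `τ` that
contain `σ`; count them by their leftmost occurrences. A leftmost occurrence at position `i` at
length `ℓ` gives one at `i` at length `ℓ + 1` (unless the window is the last one, `i = n - ℓ`) and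
one at `i - 1` (if `i > 0`). Hence the count can only drop from `ℓ` to `ℓ + 1` when all `n - ℓ`
windows of length `ℓ + 1` are distinct and contain `σ`, i.e. when it reaches its upper bound; it
then stays on that bound, which decreases by one at each step.
-/

open scoped Classical

noncomputable section

/-- A permutation of length `n`, written in one-line notation as `τ 0, τ 1, …, τ (n-1)`. -/
abbrev Perm' (n : ℕ) := Equiv.Perm (Fin n)

/-- `σ` occurs in `τ` as a consecutive pattern at (0-indexed) starting position `i`:
the window `τ i, …, τ (i+m-1)` of adjacent entries is in the same relative order as `σ`. -/
def OccursAt {m n : ℕ} (σ : Perm' m) (τ : Perm' n) (i : ℕ) : Prop :=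
  ∃ h : i + m ≤ n, ∀ a b : Fin m,
    σ a < σ b ↔
      τ ⟨i + a, by have := a.isLt; omega⟩ < τ ⟨i + b, by have := b.isLt; omega⟩

/-- Consecutive pattern containment `σ ≤ τ`. -/
def PattLE {m n : ℕ} (σ : Perm' m) (τ : Perm' n) : Prop :=
  ∃ i, OccursAt σ τ i

/-- Permutations of arbitrary length: the carrier of the consecutive pattern poset. -/
abbrev PermS : Type := Σ n : ℕ, Perm' n

/-- The order of the consecutive pattern poset. -/
def pLE (p q : PermS) : Prop := PattLE p.2 q.2

/-- The strict order of the consecutive pattern poset. -/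
def pLT (p q : PermS) : Prop := pLE p q ∧ p ≠ q

/-- The covering relation of the consecutive pattern poset. -/
def pCovBy (p q : PermS) : Prop :=
  pLT p q ∧ ∀ r : PermS, pLT p r → pLT r q → False

/-- The open interval `(p,q)` in the consecutive pattern poset. -/
def openInterval (p q : PermS) : Set PermS := {r | pLT p r ∧ pLT r q}

/-- The Hasse diagram of the open interval `(p,q)`: vertices are the permutations strictly
between `p` and `q`, edges are the covering relations of the consecutive pattern poset. -/
def hasse (p q : PermS) : SimpleGraph (openInterval p q) :=
  SimpleGraph.fromRel fun a b => pCovBy a.1 b.1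

/-- The interval `[p,q]` is disconnected if the Hasse diagram of `(p,q)` is not connected. -/
def IntervalDisconnected (p q : PermS) : Prop := ¬ (hasse p q).Connected

/-- `window τ i m` is the reduction of the window of `τ` of length `m` starting at
(0-indexed) position `i`, i.e. the pattern `τ[i+1, i+m]` in 1-indexed notation. -/
def window {n : ℕ} (τ : Perm' n) (i m : ℕ) : Perm' m :=
  if h : i + m ≤ n then
    (Tuple.sort fun a : Fin m => τ ⟨i + a, by have := a.isLt; omega⟩)⁻¹
  else 1

/-- `τ` is monotone, i.e. equal to `12…n` or `n…21`. -/
def IsMonotone {n : ℕ} (τ : Perm' n) : Prop :=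
  (∀ a b : Fin n, a ≤ b → τ a ≤ τ b) ∨ (∀ a b : Fin n, a ≤ b → τ b ≤ τ a)

/-- `τ` has a bifix (a common proper prefix and proper suffix) of length `k`. -/
def HasBifixLen {n : ℕ} (τ : Perm' n) (k : ℕ) : Prop :=
  0 < k ∧ k < n ∧ window τ 0 k = window τ (n - k) k

/-- The length `|x(τ)|` of the exterior of `τ`, the longest bifix of `τ`. -/
def extLen {n : ℕ} (τ : Perm' n) : ℕ := Nat.findGreatest (HasBifixLen τ) n

/-- The exterior `x(τ)` of `τ`: its longest bifix. -/
def extPerm {n : ℕ} (τ : Perm' n) : Perm' (extLen τ) := window τ 0 (extLen τ)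

/-- The interior `i(τ) = τ[2,n-1]` of `τ`. -/
def intPerm {n : ℕ} (τ : Perm' n) : Perm' (n - 2) := window τ 1 (n - 2)

/-- `p` straddles `q`: `p < q`, `p` is both a prefix and a suffix of `q`,
and `p` has no other occurrence in `q`. -/
def Straddles (p q : PermS) : Prop :=
  pLT p q ∧ OccursAt p.2 q.2 0 ∧ OccursAt p.2 q.2 (q.1 - p.1) ∧
    ∀ i, OccursAt p.2 q.2 i → i = 0 ∨ i = q.1 - p.1

/-- The interval `[p,q]` contains a non-trivial disconnected subinterval, i.e. a
subinterval `[a,b]` of rank at least 3 which is disconnected. -/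
def HasNontrivDisconSub (p q : PermS) : Prop :=
  ∃ a b : PermS, pLE p a ∧ pLE a b ∧ pLE b q ∧ a.1 + 3 ≤ b.1 ∧ IntervalDisconnected a b

/-- The finite set of all permutations of length at most `N`. -/
def permsUpTo (N : ℕ) : Finset PermS :=
  (Finset.range (N + 1)).sigma fun n => (Finset.univ : Finset (Perm' n))

/-- The closed interval `[p,q]` of the consecutive pattern poset, as a finite set. -/
def intervalF (p q : PermS) : Finset PermS :=
  (permsUpTo q.1).filter fun r => pLE p r ∧ pLE r q

/-- The number of elements of the interval `[σ,τ]` of rank `r`, i.e. of length `|σ| + r`. -/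
def rankCard {m n : ℕ} (σ : Perm' m) (τ : Perm' n) (r : ℕ) : ℕ :=
  ((permsUpTo n).filter fun p => pLE ⟨m, σ⟩ p ∧ pLE p ⟨n, τ⟩ ∧ p.1 = m + r).card

/-- The direct sum `σ ⊕ π` of two permutations. -/
def dsum {m k : ℕ} (σ : Perm' m) (π : Perm' k) : Perm' (m + k) :=
  finSumFinEquiv.permCongr (σ.sumCongr π)

theorem Equiv.Perm.eq_of_lt_iff_lt {α : Type*} [LinearOrder α] [Finite α] {ρ ρ' : Equiv.Perm α}
    (h : ∀ a b, ρ a < ρ b ↔ ρ' a < ρ' b) : ρ = ρ' := by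
  have hmono : StrictMono (ρ' ∘ ρ.symm) := fun x y hxy =>
    (h _ _).mp (by simpa only [Equiv.apply_symm_apply] using hxy)
  refine Equiv.ext fun a => ?_
  simpa using (congrFun hmono.eq_id (ρ a)).symm

theorem window_occursAt {n ℓ i : ℕ} (τ : Perm' n) (h : i + ℓ ≤ n) :
    OccursAt (window τ i ℓ) τ i := by
  rw [window, dif_pos h]
  set f : Fin ℓ → Fin n := fun a => τ ⟨i + a, by have := a.isLt; omega⟩
  have hinj : Function.Injective f := fun a b hab =>
    Fin.ext (by simpa using Fin.mk.inj_iff.mp (τ.injective hab))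
  have hmono : StrictMono (f ∘ Tuple.sort f) :=
    (Tuple.monotone_sort f).strictMono_of_injective (hinj.comp (Tuple.sort f).injective)
  refine ⟨h, fun a b => ?_⟩
  rw [← hmono.lt_iff_lt]
  simp only [Function.comp_apply, Equiv.Perm.coe_inv, Equiv.apply_symm_apply, f]

theorem eq_window_of_occursAt {n ℓ i : ℕ} {τ : Perm' n} {ρ : Perm' ℓ}
    (h : OccursAt ρ τ i) : ρ = window τ i ℓ :=
  Equiv.Perm.eq_of_lt_iff_lt fun a b =>
    (h.2 a b).trans ((window_occursAt τ h.1).2 a b).symm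

theorem OccursAt.trans {k ℓ n i j : ℕ} {ρ : Perm' k} {π : Perm' ℓ} {τ : Perm' n}
    (hρ : OccursAt ρ π j) (hπ : OccursAt π τ i) : OccursAt ρ τ (i + j) := by
  refine ⟨by have := hρ.1; have := hπ.1; omega, fun a b => ?_⟩
  have := hρ.1
  refine (hρ.2 a b).trans ((hπ.2 ⟨j + a, by omega⟩ ⟨j + b, by omega⟩).trans ?_)
  simp only [add_assoc]

theorem PattLE.trans {k ℓ n : ℕ} {ρ : Perm' k} {π : Perm' ℓ} {τ : Perm' n}
    (hρ : PattLE ρ π) (hπ : PattLE π τ) : PattLE ρ τ :=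
  let ⟨j, hj⟩ := hρ
  let ⟨i, hi⟩ := hπ
  ⟨i + j, hj.trans hi⟩

theorem occursAt_window_iff {k ℓ n i c : ℕ} {ρ : Perm' k} (τ : Perm' n) (h : i + ℓ ≤ n)
    (hc : c + k ≤ ℓ) : OccursAt ρ (window τ i ℓ) c ↔ OccursAt ρ τ (i + c) := by
  refine ⟨fun hρ => hρ.trans (window_occursAt τ h), fun hρ => ⟨hc, fun a b => ?_⟩⟩
  refine (hρ.2 a b).trans (Iff.trans ?_
    ((window_occursAt τ h).2 ⟨c + a, by omega⟩ ⟨c + b, by omega⟩).symm)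
  simp only [add_assoc]

theorem window_window {ℓ n i c k : ℕ} (τ : Perm' n) (h : i + ℓ ≤ n) (hc : c + k ≤ ℓ) :
    window (window τ i ℓ) c k = window τ (i + c) k :=
  (eq_window_of_occursAt
    ((occursAt_window_iff τ h hc).mpr (window_occursAt τ (by omega)))).symm

theorem window_pattLE_window {ℓ n i c k : ℕ} (τ : Perm' n) (h : i + ℓ ≤ n) (hc : c + k ≤ ℓ) :
    PattLE (window τ (i + c) k) (window τ i ℓ) :=
  ⟨c, (occursAt_window_iff τ h hc).mpr (window_occursAt τ (by omega))⟩

theorem window_add_eq_of_window_eq {ℓ n i j c k : ℕ} {τ : Perm' n} (hi : i + ℓ ≤ n)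
    (hj : j + ℓ ≤ n) (hc : c + k ≤ ℓ) (heq : window τ i ℓ = window τ j ℓ) :
    window τ (i + c) k = window τ (j + c) k := by
  rw [← window_window τ hi hc, ← window_window τ hj hc, heq]

/-- Below its first descent the sequence increases; the descent puts it on its upper bound
`a (r + 1) ≤ N - r`, where `hstep` keeps it for good. -/
theorem exists_monotoneOn_antitoneOn_of_min_le {a : ℕ → ℕ} {N : ℕ}
    (hbound : ∀ r, a (r + 1) ≤ N - r) (hstep : ∀ r, min (a r) (N - r) ≤ a (r + 1)) :
    ∃ k ≤ N, MonotoneOn a (Set.Iic k) ∧ AntitoneOn a (Set.Ici k) := by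
  have hex : ∃ k, N ≤ k ∨ a (k + 1) < a k := ⟨N, Or.inl le_rfl⟩
  set k := Nat.find hex
  have htight (hdrop : a (k + 1) < a k) (r : ℕ) (hr : k ≤ r) : a (r + 1) = N - r := by
    induction r, hr using Nat.le_induction with
    | base => have := hstep k; have := hbound k; omega
    | succ r _ ih => have := hstep (r + 1); have := hbound (r + 1); omega
  refine ⟨k, Nat.find_min' hex (Or.inl le_rfl),
    monotoneOn_of_le_add_one Set.ordConnected_Iic fun r _ _ hr => ?_,
    antitoneOn_of_add_one_le Set.ordConnected_Ici fun r _ hr _ => ?_⟩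
  · exact not_lt.mp (not_or.mp (Nat.find_min hex (Nat.lt_of_succ_le hr))).2
  · replace hr : k ≤ r := hr
    rcases le_or_gt N r with hNr | hrN
    · have := hbound r
      omega
    have hdrop : a (k + 1) < a k := (Nat.find_spec hex).resolve_left (by omega)
    rcases hr.eq_or_lt with rfl | hkr
    · exact hdrop.le
    obtain ⟨s, rfl⟩ : ∃ s, r = s + 1 := ⟨r - 1, by omega⟩
    have := htight hdrop s (by omega)
    have := htight hdrop (s + 1) (by omega)
    omega

section FirstOccurrences

variable {m n : ℕ} (σ : Perm' m) (τ : Perm' n)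

/-- The starting positions of the leftmost occurrences in `τ` of the windows of length `ℓ`
that contain `σ`; they index the elements of length `ℓ` of `[σ, τ]`. -/
def firstOccurrences (ℓ : ℕ) : Finset ℕ :=
  (Finset.range (n + 1 - ℓ)).filter fun i =>
    PattLE σ (window τ i ℓ) ∧ ∀ j < i, window τ j ℓ ≠ window τ i ℓ

variable {σ τ}

theorem mem_firstOccurrences {ℓ i : ℕ} :
    i ∈ firstOccurrences σ τ ℓ ↔
      i + ℓ ≤ n ∧ PattLE σ (window τ i ℓ) ∧ ∀ j < i, window τ j ℓ ≠ window τ i ℓ := by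
  simp only [firstOccurrences, Finset.mem_filter, Finset.mem_range, Nat.lt_sub_iff_add_lt,
    Nat.lt_add_one_iff]

theorem card_firstOccurrences_le (ℓ : ℕ) : (firstOccurrences σ τ ℓ).card ≤ n + 1 - ℓ :=
  (Finset.card_filter_le _ _).trans (Finset.card_range _).le

theorem exists_mem_firstOccurrences {ℓ i : ℕ} (hi : i + ℓ ≤ n) (hσ : PattLE σ (window τ i ℓ)) :
    ∃ j ∈ firstOccurrences σ τ ℓ, window τ j ℓ = window τ i ℓ := by
  have hex : ∃ j, window τ j ℓ = window τ i ℓ := ⟨i, rfl⟩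
  have hle : Nat.find hex ≤ i := Nat.find_min' hex rfl
  refine ⟨Nat.find hex, mem_firstOccurrences.mpr ⟨by omega, ?_, fun j hj => ?_⟩,
    Nat.find_spec hex⟩
  · rwa [Nat.find_spec hex]
  · rw [Nat.find_spec hex]
    exact Nat.find_min hex hj

/-- Lengthening a window on either side keeps leftmost occurrences leftmost. -/
theorem mem_firstOccurrences_of_add_mem {ℓ i c k : ℕ} (hi : i + ℓ ≤ n) (hc : c + k ≤ ℓ)
    (h : i + c ∈ firstOccurrences σ τ k) : i ∈ firstOccurrences σ τ ℓ := by
  obtain ⟨-, hσ, hfirst⟩ := mem_firstOccurrences.mp h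
  refine mem_firstOccurrences.mpr
    ⟨hi, hσ.trans (window_pattLE_window τ hi hc), fun j hj heq => ?_⟩
  exact hfirst (j + c) (by omega) (window_add_eq_of_window_eq (by omega) hi hc heq)

theorem min_card_firstOccurrences_le (ℓ : ℕ) :
    min (firstOccurrences σ τ ℓ).card (n - ℓ) ≤ (firstOccurrences σ τ (ℓ + 1)).card := by
  set F := firstOccurrences σ τ
  have hright : (F ℓ).erase (n - ℓ) ⊆ F (ℓ + 1) := fun i hi => by
    obtain ⟨hne, hi⟩ := Finset.mem_erase.mp hi
    have := (mem_firstOccurrences.mp hi).1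
    exact mem_firstOccurrences_of_add_mem (c := 0) (by omega) (by omega) hi
  have hleft (i : ℕ) (hi : i + 1 ∈ F ℓ) : i ∈ F (ℓ + 1) := by
    have := (mem_firstOccurrences.mp hi).1
    exact mem_firstOccurrences_of_add_mem (by omega) (by omega) hi
  by_cases hstuck : F (ℓ + 1) ⊆ F ℓ ∧ n - ℓ ∈ F ℓ
  · obtain ⟨hsub, hlast⟩ := hstuck
    have hall (i : ℕ) (hi : i ≤ n - ℓ) : i ∈ F ℓ :=
      Nat.decreasingInduction (fun j _ hj => hsub (hleft j hj)) hlast hi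
    calc min _ _ ≤ n - ℓ := min_le_right _ _
      _ = (Finset.range (n - ℓ)).card := (Finset.card_range _).symm
      _ ≤ _ := Finset.card_le_card fun i hi =>
        hleft i (hall _ (Nat.succ_le_of_lt (Finset.mem_range.mp hi)))
  · refine (min_le_left _ _).trans ?_
    by_cases hlast : n - ℓ ∈ F ℓ
    · obtain ⟨x, hx, hxF⟩ : ∃ x ∈ F (ℓ + 1), x ∉ F ℓ := by
        simpa [Finset.not_subset, hlast] using hstuck
      have hssub : (F ℓ).erase (n - ℓ) ⊂ F (ℓ + 1) := (Finset.ssubset_iff_of_subset hright).mpr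
        ⟨x, hx, fun h => hxF (Finset.mem_of_mem_erase h)⟩
      rw [← Finset.card_erase_add_one hlast]
      exact Finset.card_lt_card hssub
    · rw [Finset.erase_eq_of_notMem hlast] at hright
      exact Finset.card_le_card hright

theorem rankCard_eq_card_firstOccurrences (r : ℕ) :
    rankCard σ τ r = (firstOccurrences σ τ (m + r)).card := by
  refine (Finset.card_bij (fun i _ => (⟨m + r, window τ i (m + r)⟩ : PermS)) ?_ ?_ ?_).symm
  · intro i hi
    obtain ⟨hin, hσ, -⟩ := mem_firstOccurrences.mp hi
    simp only [Finset.mem_filter, permsUpTo, Finset.mem_sigma, Finset.mem_range,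
      Finset.mem_univ, and_true]
    exact ⟨by omega, hσ, i, window_occursAt τ hin⟩
  · intro i hi j hj hij
    have heq : window τ i (m + r) = window τ j (m + r) := eq_of_heq (Sigma.mk.inj hij).2
    obtain ⟨-, -, hi⟩ := mem_firstOccurrences.mp hi
    obtain ⟨-, -, hj⟩ := mem_firstOccurrences.mp hj
    rcases lt_trichotomy i j with h | h | h
    · exact absurd heq (hj i h)
    · exact h
    · exact absurd heq.symm (hi j h)
  · rintro ⟨ℓ, π⟩ hp
    obtain ⟨-, hσ, ⟨i, hi⟩, rfl⟩ := Finset.mem_filter.mp hp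
    have hπ : π = window τ i (m + r) := eq_window_of_occursAt hi
    subst hπ
    obtain ⟨j, hj, heq⟩ := exists_mem_firstOccurrences hi.1 hσ
    exact ⟨j, hj, by rw [heq]⟩

end FirstOccurrences

theorem stmt9_general {m n : ℕ} (σ : Perm' m) (τ : Perm' n) :
    ∃ k ≤ n - m,
      (∀ i j : ℕ, i ≤ j → j ≤ k → rankCard σ τ i ≤ rankCard σ τ j) ∧
      (∀ i j : ℕ, k ≤ i → i ≤ j → j ≤ n - m → rankCard σ τ j ≤ rankCard σ τ i) := by
  have hbound (r : ℕ) : rankCard σ τ (r + 1) ≤ n - m - r := by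
    have := card_firstOccurrences_le (σ := σ) (τ := τ) (m + (r + 1))
    rw [rankCard_eq_card_firstOccurrences]
    omega
  have hstep (r : ℕ) : min (rankCard σ τ r) (n - m - r) ≤ rankCard σ τ (r + 1) := by
    simpa only [rankCard_eq_card_firstOccurrences, ← add_assoc, Nat.sub_sub]
      using min_card_firstOccurrences_le (σ := σ) (τ := τ) (m + r)
  obtain ⟨k, hk, hmono, hanti⟩ := exists_monotoneOn_antitoneOn_of_min_le hbound hstep
  exact ⟨k, hk, fun i j hij hjk => hmono (hij.trans hjk) hjk hij,
    fun i j hki hij _ => hanti hki (hki.trans hij) hij⟩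

/-- Corollary 5.3: every interval `[σ,τ]` is rank-unimodal. -/
theorem stmt9 {m n : ℕ} (hm : 1 ≤ m) (σ : Perm' m) (τ : Perm' n) (hle : PattLE σ τ) :
    ∃ k ≤ n - m,
      (∀ i j : ℕ, i ≤ j → j ≤ k → rankCard σ τ i ≤ rankCard σ τ j) ∧
      (∀ i j : ℕ, k ≤ i → i ≤ j → j ≤ n - m → rankCard σ τ j ≤ rankCard σ τ i) :=
  stmt9_general σ τ

end
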